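/- arXiv:1402.0810 — 2 statements merged into one kernel-verified Lean document; each statement's English description precedes it below -/
import Mathlib

section
/- Let A = {P^A_i}_{i=1}^{r_A} and B = {P^B_j}_{j=1}^{r_B} be projective observables on ℂ^d. Then tr(P^B_j (Σ_i P^A_i ρ P^A_i)) = tr(P^B_j ρ) holds for every density matrix ρ and every outcome j if and only if P^A_i P^B_j = P^B_j P^A_i for all i and j. -/
open scoped BigOperators ComplexOrder
open Matrix

noncomputable section

/-- A projective observable: a finite family of mutually orthogonal
self-adjoint idempotents summing to the identity. -/
def IsProjObs {d r : ℕ} (P : Fin r → Matrix (Fin d) (Fin d) ℂ) : Prop :=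
  (∀ i, (P i).IsHermitian) ∧ (∀ i, P i * P i = P i) ∧
    (∀ i k, i ≠ k → P i * P k = 0) ∧ (∑ i, P i = 1)

/-- A density matrix: positive semidefinite with unit trace. -/
def IsDensity {d : ℕ} (ρ : Matrix (Fin d) (Fin d) ℂ) : Prop :=
  ρ.PosSemidef ∧ ρ.trace = 1

/-- The measurement channel `E^A(ρ) = Σ_i P_i ρ P_i` of a projective observable. -/
def measChannel {d r : ℕ} (P : Fin r → Matrix (Fin d) (Fin d) ℂ)
    (ρ : Matrix (Fin d) (Fin d) ℂ) : Matrix (Fin d) (Fin d) ℂ :=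
  ∑ i, P i * ρ * P i

/-- `p^B_ρ(j) = tr(P^B_j ρ)`. -/
def probB {d rB : ℕ} (Q : Fin rB → Matrix (Fin d) (Fin d) ℂ)
    (ρ : Matrix (Fin d) (Fin d) ℂ) (j : Fin rB) : ℝ :=
  ((Q j * ρ).trace).re

/-- `q^{A→B}_ρ(j) = tr(P^B_j Σ_i P^A_i ρ P^A_i)`. -/
def probAB {d rA rB : ℕ} (P : Fin rA → Matrix (Fin d) (Fin d) ℂ)
    (Q : Fin rB → Matrix (Fin d) (Fin d) ℂ)
    (ρ : Matrix (Fin d) (Fin d) ℂ) (j : Fin rB) : ℝ :=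
  ((Q j * measChannel P ρ).trace).re

open Classical in
/-- The positive semidefinite square root of a PSD matrix (junk value `0` otherwise). -/
noncomputable def msqrt {d : ℕ} (A : Matrix (Fin d) (Fin d) ℂ) :
    Matrix (Fin d) (Fin d) ℂ :=
  if h : A.PosSemidef then
    (h.1.eigenvectorUnitary : Matrix (Fin d) (Fin d) ℂ) *
      diagonal ((↑) ∘ Real.sqrt ∘ h.1.eigenvalues) *
      (star h.1.eigenvectorUnitary : Matrix (Fin d) (Fin d) ℂ)
  else 0

/-- `|X| = √(Xᴴ X)`, the positive semidefinite absolute value of a matrix. -/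
noncomputable def matAbs {d : ℕ} (X : Matrix (Fin d) (Fin d) ℂ) :
    Matrix (Fin d) (Fin d) ℂ :=
  msqrt (Xᴴ * X)

/-- The quantum fidelity `F(ρ,σ) = tr √(√ρ σ √ρ)`. -/
noncomputable def qFid {d : ℕ} (ρ σ : Matrix (Fin d) (Fin d) ℂ) : ℝ :=
  ((msqrt (msqrt ρ * σ * msqrt ρ)).trace).re

/-- Variational distance `D_1(p,q) = (1/2) Σ_j |p_j − q_j|`. -/
def distL1 {rB : ℕ} (p q : Fin rB → ℝ) : ℝ := (1 / 2) * ∑ j, |p j - q j|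

/-- Chebyshev distance `D_∞(p,q) = max_j |p_j − q_j|`. -/
noncomputable def distLinf {rB : ℕ} (p q : Fin rB → ℝ) : ℝ := ⨆ j, |p j - q j|

/-- Classical fidelity `F(p,q) = Σ_j √(p_j q_j)`. -/
noncomputable def classFid {rB : ℕ} (p q : Fin rB → ℝ) : ℝ :=
  ∑ j, Real.sqrt (p j * q j)

/-- `Q_1(A→B)`. -/
noncomputable def Q1 {d rA rB : ℕ} (P : Fin rA → Matrix (Fin d) (Fin d) ℂ)
    (Q : Fin rB → Matrix (Fin d) (Fin d) ℂ) : ℝ :=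
  sSup {x : ℝ | ∃ ρ, IsDensity ρ ∧ x = distL1 (probAB P Q ρ) (probB Q ρ)}

/-- `Q_∞(A→B)`. -/
noncomputable def Qinf {d rA rB : ℕ} (P : Fin rA → Matrix (Fin d) (Fin d) ℂ)
    (Q : Fin rB → Matrix (Fin d) (Fin d) ℂ) : ℝ :=
  sSup {x : ℝ | ∃ ρ, IsDensity ρ ∧ x = distLinf (probAB P Q ρ) (probB Q ρ)}

/-- `Q_F(A→B)`. -/
noncomputable def QF {d rA rB : ℕ} (P : Fin rA → Matrix (Fin d) (Fin d) ℂ)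
    (Q : Fin rB → Matrix (Fin d) (Fin d) ℂ) : ℝ :=
  sSup {x : ℝ | ∃ ρ, IsDensity ρ ∧
    x = 1 - (classFid (probAB P Q ρ) (probB Q ρ)) ^ 2}

/-- The rank-one projection `|v⟩⟨v|` onto a (unit) vector `v`. -/
def proj {d : ℕ} (v : Fin d → ℂ) : Matrix (Fin d) (Fin d) ℂ :=
  Matrix.vecMulVec v (star v)

/-!
By cyclicity of the trace, `tr (X · E(ρ)) = tr (E(X) · ρ)` for the measurement channel
`E(X) = Σ_i P_i X P_i`. Normalised rank-one projections are density matrices and their traces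
against a complex matrix recover its quadratic form, so the hypothesis says exactly
`E(Q_j) = Q_j` for every `j`. Finally `E(X) = X` iff `X` commutes with every `P_i`, since
orthogonality of the `P_i` gives `P_i E(X) = P_i X P_i = E(X) P_i`.
-/

namespace Matrix

variable {n : Type*} [Fintype n]

lemma eq_zero_of_forall_star_dotProduct_mulVec_eq_zero [DecidableEq n] {M : Matrix n n ℂ}
    (h : ∀ v : n → ℂ, star v ⬝ᵥ M *ᵥ v = 0) : M = 0 := by
  refine toEuclideanLin.injective ?_
  rw [map_zero, ← inner_map_self_eq_zero]
  intro x
  rw [EuclideanSpace.inner_eq_star_dotProduct, dotProduct_comm, star_dotProduct]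
  simp [h]

lemma trace_mul_vecMulVec_star (M : Matrix n n ℂ) (v : n → ℂ) :
    (M * vecMulVec v (star v)).trace = star v ⬝ᵥ M *ᵥ v := by
  rw [mul_vecMulVec, trace_vecMulVec, dotProduct_comm]

end Matrix

lemma isDensity_inv_smul_vecMulVec {d : ℕ} {v : Fin d → ℂ} (hv : v ≠ 0) :
    IsDensity ((star v ⬝ᵥ v)⁻¹ • vecMulVec v (star v)) := by
  refine ⟨(posSemidef_vecMulVec_self_star v).smul
    (inv_nonneg_of_nonneg (dotProduct_star_self_nonneg v)), ?_⟩
  rw [trace_smul, trace_vecMulVec, dotProduct_comm v, smul_eq_mul,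
    inv_mul_cancel₀ (dotProduct_star_self_eq_zero.not.mpr hv)]

lemma eq_of_forall_isDensity_trace_mul_eq {d : ℕ} {M N : Matrix (Fin d) (Fin d) ℂ}
    (h : ∀ ρ, IsDensity ρ → (M * ρ).trace = (N * ρ).trace) : M = N := by
  rw [← sub_eq_zero]
  refine eq_zero_of_forall_star_dotProduct_mulVec_eq_zero fun v => ?_
  obtain rfl | hv := eq_or_ne v 0
  · simp
  have hρ := h _ (isDensity_inv_smul_vecMulVec hv)
  rw [Matrix.mul_smul, Matrix.mul_smul, trace_smul, trace_smul, smul_right_injective _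
    (inv_ne_zero (dotProduct_star_self_eq_zero.not.mpr hv)) |>.eq_iff] at hρ
  rw [← trace_mul_vecMulVec_star, sub_mul, trace_sub, hρ, sub_self]

lemma trace_mul_measChannel {d r : ℕ} (P : Fin r → Matrix (Fin d) (Fin d) ℂ)
    (X ρ : Matrix (Fin d) (Fin d) ℂ) :
    (X * measChannel P ρ).trace = (measChannel P X * ρ).trace := by
  simp only [measChannel, Finset.mul_sum, Finset.sum_mul, trace_sum]
  refine Finset.sum_congr rfl fun i _ => ?_
  rw [← Matrix.mul_assoc, trace_mul_cycle]
  simp only [Matrix.mul_assoc]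

namespace IsProjObs

variable {d r : ℕ} {P : Fin r → Matrix (Fin d) (Fin d) ℂ}

lemma mul_measChannel (hP : IsProjObs P) (i : Fin r) (X : Matrix (Fin d) (Fin d) ℂ) :
    P i * measChannel P X = P i * X * P i := by
  rw [measChannel, Finset.mul_sum, Finset.sum_eq_single i]
  · rw [← Matrix.mul_assoc, ← Matrix.mul_assoc, hP.2.1 i]
  · intro k _ hk
    rw [← Matrix.mul_assoc, ← Matrix.mul_assoc, hP.2.2.1 i k hk.symm, Matrix.zero_mul,
      Matrix.zero_mul]
  · simp

lemma measChannel_mul (hP : IsProjObs P) (i : Fin r) (X : Matrix (Fin d) (Fin d) ℂ) :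
    measChannel P X * P i = P i * X * P i := by
  rw [measChannel, Finset.sum_mul, Finset.sum_eq_single i]
  · rw [Matrix.mul_assoc, hP.2.1 i]
  · intro k _ hk
    rw [Matrix.mul_assoc, hP.2.2.1 k i hk, Matrix.mul_zero]
  · simp

lemma measChannel_eq_self_iff (hP : IsProjObs P) (X : Matrix (Fin d) (Fin d) ℂ) :
    measChannel P X = X ↔ ∀ i, P i * X = X * P i := by
  refine ⟨fun h i => ?_, fun h => ?_⟩
  · rw [← h, hP.mul_measChannel, ← hP.measChannel_mul, h]
  · calc measChannel P X = ∑ i, X * P i := by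
          refine Finset.sum_congr rfl fun i _ => ?_
          rw [h i, Matrix.mul_assoc, hP.2.1 i]
      _ = X := by rw [← Finset.mul_sum, hP.2.2.2, Matrix.mul_one]

end IsProjObs

theorem stmt_0_general {d rA rB : ℕ}
    (P : Fin rA → Matrix (Fin d) (Fin d) ℂ) (Q : Fin rB → Matrix (Fin d) (Fin d) ℂ)
    (hP : IsProjObs P) :
    (∀ ρ : Matrix (Fin d) (Fin d) ℂ, IsDensity ρ →
        ∀ j, (Q j * measChannel P ρ).trace = (Q j * ρ).trace) ↔
      (∀ i j, P i * Q j = Q j * P i) := by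
  simp_rw [trace_mul_measChannel]
  calc (∀ ρ, IsDensity ρ → ∀ j, (measChannel P (Q j) * ρ).trace = (Q j * ρ).trace)
      ↔ ∀ j, measChannel P (Q j) = Q j :=
        ⟨fun h j => eq_of_forall_isDensity_trace_mul_eq fun ρ hρ => h ρ hρ j,
          fun h ρ _ j => by rw [h j]⟩
    _ ↔ ∀ i j, P i * Q j = Q j * P i := by
        simp only [hP.measChannel_eq_self_iff]
        exact forall_comm

theorem stmt_0 {d rA rB : ℕ} (hd : 0 < d)
    (P : Fin rA → Matrix (Fin d) (Fin d) ℂ) (Q : Fin rB → Matrix (Fin d) (Fin d) ℂ)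
    (hP : IsProjObs P) (hQ : IsProjObs Q) :
    (∀ ρ : Matrix (Fin d) (Fin d) ℂ, IsDensity ρ →
        ∀ j, (Q j * measChannel P ρ).trace = (Q j * ρ).trace) ↔
      (∀ i j, P i * Q j = Q j * P i) :=
  stmt_0_general P Q hP

end
end

section
/- Let {a_i}_{i=1}^d and {b_j}_{j=1}^d be mutually unbiased orthonormal bases of ℂ^d, and let A = {|a_i⟩⟨a_i|} and B = {|b_j⟩⟨b_j|} be the corresponding non-degenerate projective observables. Then Q_∞(A→B) = 1 − 1/d, the supremum being attained at ρ = |b_1⟩⟨b_1|. -/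
open scoped BigOperators ComplexOrder
open Matrix

noncomputable section

/-
Measuring `A` dephases `ρ` into `Σ_i ⟨a_i, ρ a_i⟩ |a_i⟩⟨a_i|`, and for mutually unbiased bases every
`|a_i⟩⟨a_i|` has uniform `B`-statistics `|⟨a_i, b_j⟩|² = 1/d`. Hence `q^{A→B}_ρ` is the uniform
distribution for every state `ρ`, and the Chebyshev distance from the uniform distribution to a
probability vector is at most `1 - 1/d`, with equality at a point mass such as `p^B` of `|b_1⟩⟨b_1|`.
-/

section RankOneProjection

variable {d : ℕ}

lemma proj_mulVec (v x : Fin d → ℂ) : proj v *ᵥ x = (star v ⬝ᵥ x) • v := by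
  rw [proj, vecMulVec_mulVec, op_smul_eq_smul]

lemma trace_proj_mul (v : Fin d → ℂ) (M : Matrix (Fin d) (Fin d) ℂ) :
    (proj v * M).trace = star v ⬝ᵥ (M *ᵥ v) := by
  rw [proj, vecMulVec_mul, trace_vecMulVec, dotProduct_comm, ← dotProduct_mulVec]

lemma proj_mul_mul_proj (v : Fin d → ℂ) (M : Matrix (Fin d) (Fin d) ℂ) :
    proj v * M * proj v = (star v ⬝ᵥ (M *ᵥ v)) • proj v := by
  rw [proj, mul_vecMulVec, ← mulVec_mulVec, ← proj, proj_mulVec, proj, smul_vecMulVec]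

lemma trace_proj_mul_proj (u v : Fin d → ℂ) :
    (proj u * proj v).trace = Complex.normSq (star v ⬝ᵥ u) := by
  rw [trace_proj_mul, proj_mulVec, dotProduct_smul, smul_eq_mul, star_dotProduct u v,
    ← Complex.mul_conj]
  rfl

lemma isDensity_proj {v : Fin d → ℂ} (hv : star v ⬝ᵥ v = 1) : IsDensity (proj v) :=
  ⟨posSemidef_vecMulVec_self_star v, by rw [proj, trace_vecMulVec, dotProduct_comm, hv]⟩

variable {a : Fin d → Fin d → ℂ}

lemma sum_proj_eq_one (ha : ∀ i j, star (a i) ⬝ᵥ a j = if i = j then 1 else 0) :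
    ∑ i, proj (a i) = 1 := by
  set V : Matrix (Fin d) (Fin d) ℂ := (of a)ᵀ
  have hV : Vᴴ * V = 1 := by
    ext i j
    simpa [V, mul_apply, one_apply, dotProduct, mul_comm] using ha i j
  have hV' : V * Vᴴ = 1 := mul_eq_one_comm.mp hV
  ext k l
  simpa [V, proj, Matrix.sum_apply, vecMulVec_apply, mul_apply] using congrFun (congrFun hV' k) l

lemma sum_dotProduct_mulVec_eq_trace (ha : ∀ i j, star (a i) ⬝ᵥ a j = if i = j then 1 else 0)
    (ρ : Matrix (Fin d) (Fin d) ℂ) : ∑ i, star (a i) ⬝ᵥ (ρ *ᵥ a i) = ρ.trace := by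
  simp_rw [← trace_proj_mul, ← trace_sum, ← Finset.sum_mul, sum_proj_eq_one ha, one_mul]

lemma measChannel_proj (a : Fin d → Fin d → ℂ) (ρ : Matrix (Fin d) (Fin d) ℂ) :
    measChannel (fun i => proj (a i)) ρ = ∑ i, (star (a i) ⬝ᵥ (ρ *ᵥ a i)) • proj (a i) := by
  simp_rw [measChannel, proj_mul_mul_proj]

end RankOneProjection

section Statistics

variable {d : ℕ} {a b : Fin d → Fin d → ℂ}

lemma probAB_proj_of_unbiased (ha : ∀ i j, star (a i) ⬝ᵥ a j = if i = j then 1 else 0)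
    (hmub : ∀ i j, Complex.normSq (star (a i) ⬝ᵥ b j) = 1 / (d : ℝ))
    (ρ : Matrix (Fin d) (Fin d) ℂ) (j : Fin d) :
    probAB (fun i => proj (a i)) (fun j => proj (b j)) ρ j = 1 / (d : ℝ) * ρ.trace.re := by
  have hterm : ∀ i, (proj (b j) * ((star (a i) ⬝ᵥ (ρ *ᵥ a i)) • proj (a i))).trace
      = ((1 / (d : ℝ) : ℝ) : ℂ) * star (a i) ⬝ᵥ (ρ *ᵥ a i) := fun i => by
    rw [mul_smul_comm, trace_smul, trace_proj_mul_proj, hmub, smul_eq_mul, mul_comm]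
  rw [probAB, measChannel_proj, Finset.mul_sum, trace_sum, Finset.sum_congr rfl fun i _ => hterm i,
    ← Finset.mul_sum, sum_dotProduct_mulVec_eq_trace ha, Complex.re_ofReal_mul]

lemma probB_proj_nonneg (b : Fin d → Fin d → ℂ) {ρ : Matrix (Fin d) (Fin d) ℂ}
    (hρ : ρ.PosSemidef) (j : Fin d) : 0 ≤ probB (fun j => proj (b j)) ρ j := by
  rw [probB, trace_proj_mul]
  exact (Complex.nonneg_iff.mp (hρ.dotProduct_mulVec_nonneg (b j))).1

lemma sum_probB_proj (hb : ∀ i j, star (b i) ⬝ᵥ b j = if i = j then 1 else 0)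
    (ρ : Matrix (Fin d) (Fin d) ℂ) : ∑ j, probB (fun j => proj (b j)) ρ j = ρ.trace.re := by
  simp_rw [probB, trace_proj_mul, ← Complex.re_sum, sum_dotProduct_mulVec_eq_trace hb]

lemma probB_proj_self (hb : ∀ i j, star (b i) ⬝ᵥ b j = if i = j then 1 else 0) (j k : Fin d) :
    probB (fun j => proj (b j)) (proj (b k)) j = if j = k then 1 else 0 := by
  rw [probB, trace_proj_mul_proj, hb]
  by_cases h : j = k <;> simp [h, Ne.symm]

end Statistics

lemma abs_inv_card_sub_le {ι : Type*} [Fintype ι] {p : ι → ℝ} (hp : ∀ j, 0 ≤ p j)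
    (hsum : ∑ j, p j = 1) (j : ι) :
    |1 / (Fintype.card ι : ℝ) - p j| ≤ 1 - 1 / (Fintype.card ι : ℝ) := by
  have hpj : p j ≤ 1 := hsum ▸ Finset.single_le_sum (fun k _ => hp k) (Finset.mem_univ j)
  rcases le_or_gt (Fintype.card ι) 1 with hcard | hcard
  · have : Subsingleton ι := Fintype.card_le_one_iff_subsingleton.mp hcard
    rw [Fintype.sum_subsingleton p j] at hsum
    rw [le_antisymm hcard (Fintype.card_pos_iff.mpr ⟨j⟩), hsum]
    norm_num
  · have hinv : 1 / (Fintype.card ι : ℝ) ≤ 1 / 2 :=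
      one_div_le_one_div_of_le two_pos (by exact_mod_cast hcard)
    rw [abs_le]
    constructor <;> linarith [hp j]

lemma distLinf_le {r : ℕ} [Nonempty (Fin r)] {p q : Fin r → ℝ} {c : ℝ}
    (h : ∀ j, |p j - q j| ≤ c) : distLinf p q ≤ c :=
  ciSup_le h

lemma abs_sub_le_distLinf {r : ℕ} (p q : Fin r → ℝ) (j : Fin r) :
    |p j - q j| ≤ distLinf p q :=
  le_ciSup (f := fun j => |p j - q j|) (Set.finite_range _).bddAbove j

theorem stmt_13 {d : ℕ} (hd : 0 < d)
    (a b : Fin d → (Fin d → ℂ))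
    (ha : ∀ i j, star (a i) ⬝ᵥ a j = if i = j then 1 else 0)
    (hb : ∀ i j, star (b i) ⬝ᵥ b j = if i = j then 1 else 0)
    (hmub : ∀ i j, Complex.normSq (star (a i) ⬝ᵥ b j) = 1 / (d : ℝ)) :
    Qinf (fun i => proj (a i)) (fun j => proj (b j)) = 1 - 1 / (d : ℝ) ∧
      distLinf (probAB (fun i => proj (a i)) (fun j => proj (b j)) (proj (b ⟨0, hd⟩)))
          (probB (fun j => proj (b j)) (proj (b ⟨0, hd⟩)))
        = 1 - 1 / (d : ℝ) := by
  set j₀ : Fin d := ⟨0, hd⟩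
  have : Nonempty (Fin d) := ⟨j₀⟩
  have hρ₀ : IsDensity (proj (b j₀)) := isDensity_proj (by rw [hb, if_pos rfl])
  have uniform : ∀ ρ, IsDensity ρ → ∀ j,
      probAB (fun i => proj (a i)) (fun j => proj (b j)) ρ j = 1 / (d : ℝ) := fun ρ hρ j => by
    rw [probAB_proj_of_unbiased ha hmub, hρ.2, Complex.one_re, mul_one]
  have upper : ∀ ρ, IsDensity ρ → distLinf (probAB (fun i => proj (a i)) (fun j => proj (b j)) ρ)
      (probB (fun j => proj (b j)) ρ) ≤ 1 - 1 / (d : ℝ) := fun ρ hρ => distLinf_le fun j => by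
    simpa [uniform ρ hρ] using abs_inv_card_sub_le (probB_proj_nonneg b hρ.1)
      (by rw [sum_probB_proj hb, hρ.2, Complex.one_re]) j
  have attained : distLinf (probAB (fun i => proj (a i)) (fun j => proj (b j)) (proj (b j₀)))
      (probB (fun j => proj (b j)) (proj (b j₀))) = 1 - 1 / (d : ℝ) := by
    refine le_antisymm (upper _ hρ₀) ?_
    have := abs_sub_le_distLinf (probAB (fun i => proj (a i)) (fun j => proj (b j)) (proj (b j₀)))
      (probB (fun j => proj (b j)) (proj (b j₀))) j₀
    have hinv : 1 / (d : ℝ) ≤ 1 := div_le_one_of_le₀ (by exact_mod_cast hd) d.cast_nonneg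
    rwa [uniform _ hρ₀, probB_proj_self hb, if_pos rfl, abs_sub_comm,
      abs_of_nonneg (sub_nonneg.mpr hinv)] at this
  exact ⟨IsGreatest.csSup_eq ⟨⟨_, hρ₀, attained.symm⟩, by rintro _ ⟨ρ, hρ, rfl⟩; exact upper ρ hρ⟩,
    attained⟩

end
end
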